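/- Let θ > 0, z₀ with θz₀ ≥ c₁θδ > 0, and τ ~ Exp(1/h). For w = δ/(θ z₀ h), the probability that θz₀τ/δ + θ* lands in ∪_{k≥1}[2πk + π/6, 2πk + π/4] equals e^{θ*w}·(e^{−2πw}/(1−e^{−2πw}))·(e^{−πw/6} − e^{−πw/4}), which converges to 1/24 as w → 0⁺ and is bounded away from 0 uniformly over 0 < w ≤ 1/(c₁θh). -/

import Mathlib

/-! In the time variable the target event is the union of the translates `[a + k p, b + k p]`,
`k ≥ 0`, of one interval by the period `p = 2πδ/(θz₀)`. Under an exponential law the masses of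
these translates form a geometric progression of ratio `e^{-2πw}`, whose sum is the closed form.
As `w → 0⁺`, both `e^{-πw/6} - e^{-πw/4}` and `1 - e^{-2πw}` vanish linearly, with slopes `π/12`
and `2π`, so the probability tends to `1/24`; positivity, continuity on a compact interval
`[u, M]` and this limit near `0` give the uniform lower bound. -/

open Real MeasureTheory ProbabilityTheory Filter

/-- The probability expression of Lemma 5.4 as a function of `w`, with phase `θ*`:
`g(w) = e^{θ*w} · e^{−2πw}/(1−e^{−2πw}) · (e^{−πw/6} − e^{−πw/4})`. -/
noncomputable def spinnerProb (θstar w : ℝ) : ℝ :=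
  Real.exp (θstar * w) * (Real.exp (-2 * Real.pi * w) / (1 - Real.exp (-2 * Real.pi * w)))
    * (Real.exp (-Real.pi * w / 6) - Real.exp (-Real.pi * w / 4))

open Set Topology

namespace ProbabilityTheory

lemma expMeasure_Icc {r a b : ℝ} (hr : 0 < r) (ha : 0 ≤ a) (hab : a ≤ b) :
    expMeasure r (Icc a b) = ENNReal.ofReal (exp (-(r * a)) - exp (-(r * b))) := by
  have := isProbabilityMeasure_expMeasure hr
  have : NullSingletonClass (expMeasure r) := nullSingletonClass_withDensity _
  rw [← measure_congr Ioc_ae_eq_Icc, ← measure_cdf (expMeasure r), StieltjesFunction.measure_Ioc,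
    cdf_expMeasure_eq hr, cdf_expMeasure_eq hr, if_pos (ha.trans hab), if_pos ha]
  ring_nf

lemma expMeasure_iUnion_Icc_add_nat_mul {r a b p : ℝ} (hr : 0 < r) (ha : 0 ≤ a) (hab : a ≤ b)
    (hbp : b < a + p) :
    expMeasure r (⋃ k : ℕ, Icc (a + k * p) (b + k * p))
      = ENNReal.ofReal ((exp (-(r * a)) - exp (-(r * b))) / (1 - exp (-(r * p)))) := by
  have hp : 0 < p := by linarith
  have hdisj : Pairwise (Function.onFun Disjoint fun k : ℕ => Icc (a + k * p) (b + k * p)) := by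
    refine pairwise_disjoint_on _ |>.mpr fun m n hmn => disjoint_left.mpr fun t htm htn => ?_
    have : (m : ℝ) + 1 ≤ n := by exact_mod_cast hmn
    nlinarith [htm.2, htn.1]
  set D := exp (-(r * a)) - exp (-(r * b))
  set q := exp (-(r * p))
  have hq0 : 0 ≤ q := (exp_pos _).le
  have hq1 : q < 1 := exp_lt_one_iff.mpr (by nlinarith)
  have hD : 0 ≤ D := sub_nonneg.mpr (exp_le_exp.mpr (by nlinarith))
  have hterm (k : ℕ) : expMeasure r (Icc (a + k * p) (b + k * p)) = ENNReal.ofReal (D * q ^ k) := by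
    rw [expMeasure_Icc hr (by positivity) (by linarith)]
    simp only [D, q, ← exp_nat_mul, sub_mul, ← exp_add]
    ring_nf
  rw [measure_iUnion hdisj fun k => measurableSet_Icc, tsum_congr hterm,
    ← ENNReal.ofReal_tsum_of_nonneg (fun k => by positivity)
      ((summable_geometric_of_lt_one hq0 hq1).mul_left _), tsum_mul_left,
    tsum_geometric_of_lt_one hq0 hq1, div_eq_mul_inv]

end ProbabilityTheory

lemma setOf_le_mul_add_and_mul_add_le {c β x y : ℝ} (hc : 0 < c) :
    {t : ℝ | x ≤ c * t + β ∧ c * t + β ≤ y} = Icc ((x - β) / c) ((y - β) / c) := by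
  ext t
  simp only [mem_ofPred_eq, mem_Icc, div_le_iff₀ hc, le_div_iff₀ hc]
  constructor <;> rintro ⟨h₁, h₂⟩ <;> constructor <;> linarith

lemma tendsto_exp_mul_sub_exp_mul_div (a b : ℝ) :
    Tendsto (fun w => (exp (a * w) - exp (b * w)) / w) (𝓝[≠] 0) (𝓝 (a - b)) := by
  have hderiv : HasDerivAt (fun w => exp (a * w) - exp (b * w)) (a - b) 0 := by
    simpa using ((hasDerivAt_id 0).const_mul a).exp.fun_sub ((hasDerivAt_id 0).const_mul b).exp
  refine (hasDerivAt_iff_tendsto_slope.mp hderiv).congr fun w => ?_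
  simp [slope_def_field]

lemma spinnerProb_eq (θstar w : ℝ) :
    spinnerProb θstar w
      = (exp (-(w * (2 * π + π / 6 - θstar))) - exp (-(w * (2 * π + π / 4 - θstar))))
        / (1 - exp (-(w * (2 * π)))) := by
  have hexp (x : ℝ) : exp (-(w * (2 * π + x - θstar)))
      = exp (θstar * w) * exp (-2 * π * w) * exp (-(w * x)) := by
    rw [← exp_add, ← exp_add]
    ring_nf
  rw [spinnerProb, hexp, hexp]
  ring_nf

lemma spinnerProb_pos (θstar : ℝ) {w : ℝ} (hw : 0 < w) : 0 < spinnerProb θstar w := by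
  have h₁ : exp (-2 * π * w) < 1 := exp_lt_one_iff.mpr (by nlinarith [pi_pos])
  have h₂ : exp (-π * w / 4) < exp (-π * w / 6) := exp_lt_exp.mpr (by nlinarith [pi_pos])
  unfold spinnerProb
  have := sub_pos.mpr h₁
  have := sub_pos.mpr h₂
  positivity

lemma continuousOn_spinnerProb (θstar : ℝ) : ContinuousOn (spinnerProb θstar) (Ioi 0) := by
  intro w (hw : 0 < w)
  have : 1 - exp (-2 * π * w) ≠ 0 :=
    (sub_pos.mpr (exp_lt_one_iff.mpr (by nlinarith [pi_pos]))).ne'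
  unfold spinnerProb
  fun_prop (disch := assumption)

lemma tendsto_spinnerProb (θstar : ℝ) :
    Tendsto (spinnerProb θstar) (𝓝[>] 0) (𝓝 (1 / 24)) := by
  have hnum := (tendsto_exp_mul_sub_exp_mul_div (-π / 6) (-π / 4)).mono_left (nhdsGT_le_nhdsNE 0)
  have hden := (tendsto_exp_mul_sub_exp_mul_div 0 (-2 * π)).mono_left (nhdsGT_le_nhdsNE 0)
  have hfac : Tendsto (fun w => exp (θstar * w) * exp (-2 * π * w)) (𝓝[>] 0) (𝓝 1) := by
    have : Continuous fun w => exp (θstar * w) * exp (-2 * π * w) := by fun_prop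
    simpa using (this.tendsto 0).mono_left nhdsWithin_le_nhds
  have hlim := hfac.mul (hnum.div hden (by simp [pi_ne_zero]))
  convert hlim.congr' ?_ using 2
  · field_simp
    ring
  filter_upwards [self_mem_nhdsWithin] with w (hw : 0 < w)
  have : 1 - exp (-2 * π * w) ≠ 0 :=
    (sub_pos.mpr (exp_lt_one_iff.mpr (by nlinarith [pi_pos]))).ne'
  simp only [spinnerProb, Pi.div_apply, zero_mul, exp_zero, neg_div, neg_mul, mul_comm _ w,
    ← mul_div_assoc]
  field_simp

lemma exists_pos_forall_Ioc_le_of_tendsto_nhdsGT {f : ℝ → ℝ} {L M : ℝ}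
    (hf : ContinuousOn f (Ioc 0 M)) (hpos : ∀ x ∈ Ioc 0 M, 0 < f x)
    (hL : Tendsto f (𝓝[>] 0) (𝓝 L)) (hL0 : 0 < L) :
    ∃ ε, 0 < ε ∧ ∀ x ∈ Ioc 0 M, ε ≤ f x := by
  obtain ⟨u, hu, hnear⟩ := mem_nhdsGT_iff_exists_Ioo_subset.mp
    (hL.eventually (eventually_gt_nhds (half_lt_self hL0)))
  have hsub : Icc u M ⊆ Ioc 0 M := fun x hx => ⟨(mem_Ioi.mp hu).trans_le hx.1, hx.2⟩
  obtain ⟨ε', hε', hfar⟩ :=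
    isCompact_Icc.exists_forall_le' (hf.mono hsub) fun x hx => hpos x (hsub hx)
  refine ⟨min (L / 2) ε', lt_min (half_pos hL0) hε', fun x hx => ?_⟩
  rcases lt_or_ge x u with hxu | hux
  · exact (min_le_left _ _).trans (hnear ⟨hx.1, hxu⟩).le
  · exact (min_le_right _ _).trans (hfar x ⟨hux, hx.2⟩)

/-- The probability computation in Lemma 5.4: for `τ ~ Exp(1/h)` and
`w = δ/(θz₀h)`, the probability that `θz₀τ/δ + θ*` lands in
`∪_{k≥1}[2πk + π/6, 2πk + π/4]` equals `spinnerProb θ* w`; moreover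
`spinnerProb θ* w → 1/24` as `w → 0⁺` and is bounded away from `0` uniformly
over `0 < w ≤ 1/(c₁θh)`. -/
theorem spinner_probability (θ δ z₀ c₁ h θstar : ℝ)
    (hθ : 0 < θ) (hδ : 0 < δ) (hc₁ : 0 < c₁) (hh : 0 < h)
    (hz₀ : θ * z₀ ≥ c₁ * θ * δ)
    (hθstar : θstar ∈ Set.Ico (0:ℝ) (2 * Real.pi)) :
    expMeasure (1 / h)
        (⋃ k : ℕ, ⋃ _ : 1 ≤ k,
          {t : ℝ | 2 * Real.pi * k + Real.pi / 6 ≤ θ * z₀ * t / δ + θstar ∧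
            θ * z₀ * t / δ + θstar ≤ 2 * Real.pi * k + Real.pi / 4})
      = ENNReal.ofReal (spinnerProb θstar (δ / (θ * z₀ * h))) ∧
    Tendsto (spinnerProb θstar) (nhdsWithin 0 (Set.Ioi 0)) (nhds (1 / 24)) ∧
    ∃ ε : ℝ, 0 < ε ∧ ∀ w : ℝ, 0 < w → w ≤ 1 / (c₁ * θ * h) →
      ε ≤ spinnerProb θstar w := by
  refine ⟨?_, tendsto_spinnerProb θstar, ?_⟩
  · set v := θ * z₀ / δ
    have hv : 0 < v := div_pos ((by positivity : 0 < c₁ * θ * δ).trans_le hz₀) hδ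
    have hunion : (⋃ k : ℕ, ⋃ _ : 1 ≤ k,
          {t : ℝ | 2 * π * k + π / 6 ≤ θ * z₀ * t / δ + θstar ∧
            θ * z₀ * t / δ + θstar ≤ 2 * π * k + π / 4})
        = ⋃ n : ℕ, Icc ((2 * π + π / 6 - θstar) / v + n * (2 * π / v))
            ((2 * π + π / 4 - θstar) / v + n * (2 * π / v)) := by
      rw [iUnion_ge_eq_iUnion_nat_add _ 1]
      refine iUnion_congr fun n => ?_
      convert setOf_le_mul_add_and_mul_add_le (x := 2 * π * (n + 1 : ℕ) + π / 6)
        (y := 2 * π * (n + 1 : ℕ) + π / 4) (β := θstar) hv using 1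
      · simp only [v, mul_div_right_comm (θ * z₀) _ δ]
      · push_cast
        ring_nf
    rw [hunion, expMeasure_iUnion_Icc_add_nat_mul (by positivity)
      (div_nonneg (by linarith [hθstar.2, pi_pos]) hv.le) (by gcongr; linarith [pi_pos])
      (by rw [← add_div, div_lt_div_iff_of_pos_right hv]; linarith [pi_pos]), spinnerProb_eq]
    simp only [v]
    field_simp
  · obtain ⟨ε, hε, hle⟩ := exists_pos_forall_Ioc_le_of_tendsto_nhdsGT
      ((continuousOn_spinnerProb θstar).mono Ioc_subset_Ioi_self)
      (fun w hw => spinnerProb_pos θstar hw.1) (tendsto_spinnerProb θstar) (by norm_num)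
    exact ⟨ε, hε, fun w hw₀ hwM => hle w ⟨hw₀, hwM⟩⟩
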